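/- For every m > 0 and every z ∈ ℂ, one has max{|z+m|, |z−m|} · (1 + |z²−m²|²)^{-1/4} ≤ 2m + 1. -/

import Mathlib

/-! With `a = ‖z + m‖` and `b = ‖z - m‖` one has `a * b = ‖z² - m²‖` and `|a - b| ≤ 2m`.
Hence `max a b ≤ min a b + 2m ≤ (2m + 1) * max 1 (min a b)`, and `max 1 (min a b)` is at most
`(1 + (a * b)²)^{1/4}` because `(min a b)² ≤ min a b * max a b = a * b`. -/

open Real

lemma one_max_le_rpow_quarter {n M : ℝ} (hn : 0 ≤ n) (hnM : n ≤ M) :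
    max 1 n ≤ (1 + (n * M) ^ 2) ^ (4⁻¹ : ℝ) := by
  rw [le_rpow_inv_iff_of_pos (by positivity) (by positivity) (by norm_num), rpow_ofNat]
  rcases le_total n 1 with h | h
  · rw [max_eq_left h]; nlinarith
  · rw [max_eq_right h]
    have : n ^ 2 ≤ n * M := by nlinarith
    nlinarith

lemma max_le_mul_rpow_quarter {a b c : ℝ} (ha : 0 ≤ a) (hb : 0 ≤ b) (hc : 0 ≤ c)
    (hab : |a - b| ≤ c) : max a b ≤ (c + 1) * (1 + (a * b) ^ 2) ^ (4⁻¹ : ℝ) := by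
  have hmax : max a b ≤ min a b + c := by linarith [max_sub_min_eq_abs' a b]
  calc max a b ≤ max 1 (min a b) + c * max 1 (min a b) := by
        nlinarith [le_max_right 1 (min a b), le_max_left 1 (min a b)]
    _ = (c + 1) * max 1 (min a b) := by ring
    _ ≤ (c + 1) * (1 + (a * b) ^ 2) ^ (4⁻¹ : ℝ) := by
        rw [← min_mul_max a b]
        gcongr
        exact one_max_le_rpow_quarter (le_min ha hb) min_le_max

lemma max_norm_le_mul_rpow_quarter {𝕜 : Type*} [NormedDivisionRing 𝕜] (x y : 𝕜) :
    max ‖x‖ ‖y‖ ≤ (‖x - y‖ + 1) * (1 + ‖x * y‖ ^ 2) ^ (4⁻¹ : ℝ) := by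
  rw [norm_mul]
  exact max_le_mul_rpow_quarter (norm_nonneg x) (norm_nonneg y) (norm_nonneg _)
    (abs_norm_sub_norm_le x y)

/-- For `m > 0` and `z ∈ ℂ`: `max{|z+m|, |z−m|} · (1 + |z²−m²|²)^{-1/4} ≤ 2m + 1`,
i.e. `max{|z+m|,|z−m|} ≤ (2m+1)⟨z²−m²⟩^{1/2}` with the Japanese bracket. -/
theorem max_div_bracket_le (m : ℝ) (hm : 0 < m) (z : ℂ) :
    max ‖z + (m : ℂ)‖ ‖z - (m : ℂ)‖ * (1 + ‖z ^ 2 - (m : ℂ) ^ 2‖ ^ 2) ^ (-(1/4) : ℝ)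
      ≤ 2 * m + 1 := by
  have hdiff : ‖(z + m) - (z - m)‖ = 2 * m := by
    rw [show (z + m) - (z - m) = ((2 * m : ℝ) : ℂ) by push_cast; ring, Complex.norm_real,
      Real.norm_of_nonneg (by positivity)]
  have hprod : (z + m) * (z - m) = z ^ 2 - (m : ℂ) ^ 2 := by ring
  have key := max_norm_le_mul_rpow_quarter (z + m) (z - m)
  rw [hdiff, hprod] at key
  rw [show (-(1/4) : ℝ) = -4⁻¹ by norm_num, rpow_neg (by positivity),
    mul_inv_le_iff₀ (by positivity)]
  exact key
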